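/- Let 𝒢 := ((ℌ_n, ω_n))_{n∈ℕ*} be a *-fusion frame of a Hilbert 𝔄-module ℌ with lower bound A. Then the analysis operator 𝒮_𝒢 : ℌ → ℌ, x ↦ ∑_{n=1}^∞ ω_n² P_{ℌ_n}(x), is an invertible operator; in particular its positive square root √𝒮_𝒢 satisfies ‖√𝒮_𝒢(x)‖_ℌ ≥ ‖A⁻¹‖_𝔄⁻¹ ‖x‖_ℌ for all x ∈ ℌ. -/

import Mathlib

open scoped InnerProductSpace RightActions

variable {𝔄 : Type*} [CStarAlgebra 𝔄] [PartialOrder 𝔄] [StarOrderedRing 𝔄]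
/-- The Hilbert C⋆-module class as Mathlib stated it in December 2024 (right `A`-action,
inner product `A`-linear on the right); Mathlib's current `CStarModule` uses a left action. -/
class CStarModuleRight (A E : Type*) [NonUnitalSemiring A] [StarRing A] [Module ℂ A]
    [AddCommGroup E] [Module ℂ E] [PartialOrder A] [SMul Aᵐᵒᵖ E] [Norm A] [Norm E]
    extends Inner A E where
  inner_add_right {x} {y} {z} : inner x (y + z) = inner x y + inner x z
  inner_self_nonneg {x} : 0 ≤ inner x x
  inner_self {x} : inner x x = 0 ↔ x = 0
  inner_op_smul_right {a : A} {x y : E} : inner x (y <• a) = inner x y * a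
  inner_smul_right_complex {z : ℂ} {x} {y} : inner x (z • y) = z • inner x y
  star_inner x y : star (inner x y) = inner y x
  norm_eq_sqrt_norm_inner_self x : ‖x‖ = √‖inner x x‖

variable {H : Type*} [NormedAddCommGroup H] [NormedSpace ℂ H] [Module 𝔄ᵐᵒᵖ H]
  [CStarModuleRight 𝔄 H] [CompleteSpace H]

/-- An element of a C*-algebra is *strictly positive* if it is positive and invertible. -/
def IsStrictlyPositive' (a : 𝔄) : Prop := 0 ≤ a ∧ IsUnit a

/-- A *weight* of the C*-algebra `𝔄` is a sequence of central strictly positive elements. -/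
def IsWeight (ω : ℕ → 𝔄) : Prop :=
  ∀ n, ω n ∈ Set.center 𝔄 ∧ IsStrictlyPositive' (ω n)

/-- `P` is the orthogonal projection of the Hilbert `𝔄`-module `H` onto the orthogonally
complemented submodule `K`: a bounded `𝔄`-linear idempotent which is self-adjoint with
respect to the `𝔄`-valued inner product and has range `K`. -/
def IsOrthoProjectionOnto (P : H →L[ℂ] H) (K : Submodule 𝔄ᵐᵒᵖ H) : Prop :=
  (∀ (a : 𝔄) (x : H), P (x <• a) = (P x) <• a) ∧
  (∀ x, P (P x) = P x) ∧
  (∀ x y : H, ⟪P x, y⟫_𝔄 = ⟪x, P y⟫_𝔄) ∧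
  (∀ x, P x ∈ K) ∧ (∀ x ∈ K, P x = x)

/-- The weighted sequence of orthogonally complemented submodules whose orthogonal
projections are `P n` is a *-fusion frame of `H` with lower bound `A` and upper bound `B`. -/
def IsFusionFrameWith (P : ℕ → H →L[ℂ] H) (ω : ℕ → 𝔄) (A B : 𝔄) : Prop :=
  IsStrictlyPositive' A ∧ IsStrictlyPositive' B ∧
  ∀ x : H, Summable (fun n => ω n ^ 2 * ⟪P n x, P n x⟫_𝔄) ∧
    ⟪x <• A, x <• A⟫_𝔄 ≤ ∑' n, ω n ^ 2 * ⟪P n x, P n x⟫_𝔄 ∧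
    (∑' n, ω n ^ 2 * ⟪P n x, P n x⟫_𝔄) ≤ ⟪x <• B, x <• B⟫_𝔄

/-- A *-fusion frame (with some pair of strictly positive bounds). -/
def IsFusionFrame (P : ℕ → H →L[ℂ] H) (ω : ℕ → 𝔄) : Prop :=
  ∃ A B : 𝔄, IsFusionFrameWith P ω A B

/-!
The frame operator `S = ∑ ω_n² P_n` converges pointwise: by Cauchy–Schwarz for the positive
`𝔄`-valued form `(u, v) ↦ ∑_{n ∈ F} ω_n² ⟪P_n u, P_n v⟫`, its partial sums satisfy
`‖∑_{n ∈ F} ω_n² P_n x‖² ≤ ‖B‖² ‖∑_{n ∈ F} ω_n² |P_n x|²‖`, and Banach–Steinhaus makes the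
limit bounded. The lower frame bound says `|x A|² ≼ ⟪x, S x⟫`, and writing `x = (x A) A⁻¹` gives
`‖x‖² ≤ ‖A⁻¹‖² ‖⟪x, S x⟫‖`. With `⟪x, S x⟫ = |√S x|²` this is the estimate for `√S`; with
Cauchy–Schwarz it gives `‖x‖ ≤ ‖A⁻¹‖² ‖(S + t) x‖` for all `t ≥ 0`.

Closed submodules of a Hilbert C⋆-module need not be complemented, so unlike in Hilbert space
injectivity with closed range does not give surjectivity. Instead the method of continuity
moves invertibility of `S + t` from `t > ‖S‖` down to `t = 0`, in steps controlled by the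
uniform lower bound.
-/

namespace ContinuousLinearMap

variable {𝕜 E : Type*} [RCLike 𝕜] [NormedAddCommGroup E] [NormedSpace 𝕜 E] [CompleteSpace E]

theorem isUnit_of_norm_sub_lt {T T' : E →L[𝕜] E} {C : ℝ} (hC : 0 ≤ C) (hT : IsUnit T)
    (hlow : ∀ x, ‖x‖ ≤ C * ‖T x‖) (hT' : C * ‖T' - T‖ < 1) : IsUnit T' := by
  nontriviality E →L[𝕜] E
  obtain ⟨u, rfl⟩ := hT
  have hinv : ‖(↑u⁻¹ : E →L[𝕜] E)‖ ≤ C := by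
    refine opNorm_le_bound _ hC fun y => ?_
    have := hlow ((↑u⁻¹ : E →L[𝕜] E) y)
    rwa [← mul_apply_eq_comp, Units.mul_inv, one_apply_eq_self] at this
  have hpos := Units.norm_pos u⁻¹
  refine (u.ofNearby T' ?_).isUnit
  rw [← mul_one ‖(↑u⁻¹ : E →L[𝕜] E)‖⁻¹, lt_inv_mul_iff₀ hpos]
  exact (mul_le_mul_of_nonneg_right hinv (norm_nonneg _)).trans_lt hT'

theorem isUnit_of_forall_add_smul_bounded_below {T : E →L[𝕜] E} {C : ℝ} (hC : 0 ≤ C)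
    (h : ∀ t : ℝ, 0 ≤ t → ∀ x, ‖x‖ ≤ C * ‖T x + (t : 𝕜) • x‖) : IsUnit T := by
  set L : ℝ → E →L[𝕜] E := fun t => T + (t : 𝕜) • 1
  have hdist (s t : ℝ) : ‖L s - L t‖ ≤ |s - t| := by
    refine opNorm_le_bound _ (abs_nonneg _) fun x => ?_
    rw [add_sub_add_left_eq_sub, ← sub_smul, smul_apply, norm_smul, ← RCLike.ofReal_sub,
      RCLike.norm_ofReal, one_apply_eq_self]
  set t₀ := ‖T‖ + 1
  have hbase (t : ℝ) (ht : t₀ ≤ t) : IsUnit (L t) := by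
    have htpos : 0 < t := by linarith [norm_nonneg T]
    have hscalar : IsUnit ((t : 𝕜) • (1 : E →L[𝕜] E)) := by
      rw [← Algebra.algebraMap_eq_smul_one]
      exact (isUnit_iff_ne_zero.mpr (by exact_mod_cast htpos.ne')).map _
    refine isUnit_of_norm_sub_lt (inv_nonneg.mpr htpos.le) hscalar (fun x => ?_) ?_
    · simp [norm_smul, abs_of_pos htpos, htpos.ne']
    · rw [inv_mul_lt_one₀ htpos]
      simpa [L] using (lt_add_one _).trans_le ht
  set δ := (C + 1)⁻¹
  have hδ : 0 < δ := by positivity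
  have hCδ : C * δ < 1 := by rw [← div_eq_mul_inv, div_lt_one (by positivity)]; linarith
  have hstep (n : ℕ) : ∀ t, 0 ≤ t → t₀ - n * δ ≤ t → IsUnit (L t) := by
    induction n with
    | zero => intro t _ ht; exact hbase t (by simpa using ht)
    | succ n ih =>
      intro t ht htn
      refine isUnit_of_norm_sub_lt hC (ih (t + δ) (by positivity) (by push_cast at htn; linarith))
        (h _ (by positivity)) ?_
      calc C * ‖L t - L (t + δ)‖ ≤ C * |t - (t + δ)| := by gcongr; exact hdist _ _
        _ = C * δ := by rw [abs_sub_comm, add_sub_cancel_left, abs_of_pos hδ]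
        _ < 1 := hCδ
  obtain ⟨n, hn⟩ := exists_nat_ge (t₀ / δ)
  simpa [L] using hstep n 0 le_rfl (by rw [div_le_iff₀ hδ] at hn; linarith)

end ContinuousLinearMap

namespace CStarModuleRight

variable {A E : Type*} [CStarAlgebra A] [PartialOrder A] [NormedAddCommGroup E] [NormedSpace ℂ E]
  [Module Aᵐᵒᵖ E] [CStarModuleRight A E]

def innerₗ (x : E) : E →ₗ[ℂ] A where
  toFun := inner A x
  map_add' _ _ := inner_add_right
  map_smul' _ _ := inner_smul_right_complex

@[simp]
lemma inner_sub_right {x y z : E} : ⟪x, y - z⟫_A = ⟪x, y⟫_A - ⟪x, z⟫_A :=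
  map_sub (innerₗ x) y z

lemma inner_sum_right {ι : Type*} {s : Finset ι} {x : E} {y : ι → E} :
    ⟪x, ∑ i ∈ s, y i⟫_A = ∑ i ∈ s, ⟪x, y i⟫_A :=
  map_sum (innerₗ x) ..

@[simp]
lemma inner_op_smul_left {a : A} {x y : E} : ⟪x <• a, y⟫_A = star a * ⟪x, y⟫_A := by
  rw [← star_inner, inner_op_smul_right, star_mul, star_inner]

lemma ext_inner_left {x y : E} (h : ∀ z, ⟪z, x⟫_A = ⟪z, y⟫_A) : x = y := by
  rw [← sub_eq_zero, ← inner_self (A := A), inner_sub_right, h, sub_self]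

variable (A) in
lemma smul_op_smul_comm (c : ℂ) (x : E) (a : A) : (c • x) <• a = c • (x <• a) :=
  ext_inner_left (A := A) fun z => by
    rw [inner_op_smul_right, inner_smul_right_complex, inner_smul_right_complex,
      inner_op_smul_right, smul_mul_assoc]

variable (A) in
lemma norm_sq_eq (x : E) : ‖x‖ ^ 2 = ‖⟪x, x⟫_A‖ := by
  rw [norm_eq_sqrt_norm_inner_self (A := A) x, Real.sq_sqrt (norm_nonneg _)]

end CStarModuleRight

section PosSemidefForm

variable {A M : Type*} [CStarAlgebra A] [PartialOrder A] [AddCommGroup M] [SMul Aᵐᵒᵖ M]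

structure IsPosSemidefForm (q : M → M → A) : Prop where
  map_sub_right (u v w : M) : q u (v - w) = q u v - q u w
  map_op_smul_right (u v : M) (a : A) : q u (v <• a) = q u v * a
  star_apply (u v : M) : star (q u v) = q v u
  nonneg (u : M) : 0 ≤ q u u

namespace IsPosSemidefForm

variable {q : M → M → A} (hq : IsPosSemidefForm q)
include hq

lemma map_sub_left (u v w : M) : q (u - v) w = q u w - q v w := by
  rw [← hq.star_apply, hq.map_sub_right, star_sub, hq.star_apply, hq.star_apply]

lemma map_op_smul_left (u v : M) (a : A) : q (u <• a) v = star a * q u v := by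
  rw [← hq.star_apply, hq.map_op_smul_right, star_mul, hq.star_apply]

theorem norm_sq_le [StarOrderedRing A] (u v : M) : ‖q u v‖ ^ 2 ≤ ‖q u u‖ * ‖q v v‖ := by
  set a := q u v
  have hconj : star a * q u u * a ≤ ‖q u u‖ • (star a * a) :=
    CStarAlgebra.star_left_conjugate_le_norm_smul (hq.star_apply u u)
  have key (t : ℝ) : (2 * t - t ^ 2 * ‖q u u‖) • (star a * a) ≤ q v v := by
    rw [← sub_nonneg]
    calc (0 : A) ≤ q (u <• (t • a) - v) (u <• (t • a) - v) := hq.nonneg _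
      _ = (t ^ 2) • (star a * q u u * a) - (2 * t) • (star a * a) + q v v := by
        rw [hq.map_sub_left, hq.map_sub_right, hq.map_sub_right, hq.map_op_smul_left,
          hq.map_op_smul_left, hq.map_op_smul_right, hq.map_op_smul_right, ← hq.star_apply u v]
        simp only [star_smul, star_trivial, smul_mul_assoc, mul_smul_comm, smul_smul, mul_assoc]
        module
      _ ≤ (t ^ 2 * ‖q u u‖) • (star a * a) - (2 * t) • (star a * a) + q v v := by
        have h := smul_le_smul_of_nonneg_left hconj (sq_nonneg t)
        rw [smul_smul] at h
        gcongr
      _ = _ := by module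
  have hreal (t : ℝ) : 0 ≤ (‖q u u‖ * ‖a‖ ^ 2) * (t * t) + (-2 * ‖a‖ ^ 2) * t + ‖q v v‖ := by
    rcases le_or_gt 0 (2 * t - t ^ 2 * ‖q u u‖) with ht | ht
    · have h := CStarAlgebra.norm_le_norm_of_nonneg_of_le
        (smul_nonneg ht (star_mul_self_nonneg a)) (key t)
      rw [norm_smul, CStarRing.norm_star_mul_self, Real.norm_of_nonneg ht] at h
      nlinarith
    · nlinarith [norm_nonneg (q v v), sq_nonneg ‖a‖]
  have hdisc := discrim_le_zero hreal
  rw [discrim] at hdisc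
  rcases (sq_nonneg ‖a‖).eq_or_lt with ha | ha
  · rw [← ha]
    positivity
  · nlinarith

end IsPosSemidefForm

end PosSemidefForm

namespace CStarModuleRight

variable {A E : Type*} [CStarAlgebra A] [PartialOrder A] [NormedAddCommGroup E] [NormedSpace ℂ E]
  [Module Aᵐᵒᵖ E] [CStarModuleRight A E]

lemma isPosSemidefForm_inner : IsPosSemidefForm (inner A : E → E → A) where
  map_sub_right _ _ _ := inner_sub_right
  map_op_smul_right _ _ _ := inner_op_smul_right
  star_apply := star_inner
  nonneg _ := inner_self_nonneg

variable (A) in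
lemma norm_inner_le [StarOrderedRing A] (x y : E) : ‖⟪x, y⟫_A‖ ≤ ‖x‖ * ‖y‖ := by
  refine (pow_le_pow_iff_left₀ (norm_nonneg _) (by positivity) two_ne_zero).mp ?_
  rw [mul_pow, norm_sq_eq A x, norm_sq_eq A y]
  exact isPosSemidefForm_inner.norm_sq_le x y

variable (A) in
noncomputable def innerSL [StarOrderedRing A] (y : E) : E →L[ℂ] A :=
  (innerₗ y).mkContinuous ‖y‖ (norm_inner_le A y)

lemma innerSL_apply [StarOrderedRing A] (x y : E) : innerSL A y x = ⟪y, x⟫_A := rfl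

lemma norm_op_smul_le (x : E) (a : A) : ‖x <• a‖ ≤ ‖x‖ * ‖a‖ := by
  refine (pow_le_pow_iff_left₀ (norm_nonneg _) (by positivity) two_ne_zero).mp ?_
  rw [norm_sq_eq A, mul_pow, norm_sq_eq A, inner_op_smul_left, inner_op_smul_right, ← mul_assoc]
  calc ‖star a * ⟪x, x⟫_A * a‖ ≤ ‖star a‖ * ‖⟪x, x⟫_A‖ * ‖a‖ := norm_mul₃_le
    _ = ‖⟪x, x⟫_A‖ * ‖a‖ ^ 2 := by rw [norm_star]; ring

variable (E) in
noncomputable def opSmulCLM (a : A) : E →L[ℂ] E :=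
  LinearMap.mkContinuous
    { toFun x := x <• a
      map_add' x y := smul_add _ x y
      map_smul' c x := smul_op_smul_comm A c x a }
    ‖a‖ fun x => (norm_op_smul_le x a).trans_eq (mul_comm _ _)

lemma opSmulCLM_apply (a : A) (x : E) : opSmulCLM E a x = x <• a := rfl

lemma norm_sq_le_of_inner_op_smul_self_le [StarOrderedRing A] (u : Aˣ) {x : E} {Y : A}
    (h : ⟪x <• (u : A), x <• (u : A)⟫_A ≤ Y) : ‖x‖ ^ 2 ≤ ‖(↑u⁻¹ : A)‖ ^ 2 * ‖Y‖ := by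
  have hx : ‖x‖ ≤ ‖x <• (u : A)‖ * ‖(↑u⁻¹ : A)‖ := by
    conv_lhs => rw [← one_smul Aᵐᵒᵖ x, ← MulOpposite.op_one, ← u.mul_inv, ← op_smul_op_smul]
    exact norm_op_smul_le _ _
  calc ‖x‖ ^ 2 ≤ (‖x <• (u : A)‖ * ‖(↑u⁻¹ : A)‖) ^ 2 := by gcongr
    _ = ‖(↑u⁻¹ : A)‖ ^ 2 * ‖⟪x <• (u : A), x <• (u : A)⟫_A‖ := by
      rw [mul_pow, norm_sq_eq A]; ring
    _ ≤ ‖(↑u⁻¹ : A)‖ ^ 2 * ‖Y‖ := by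
      gcongr
      exact CStarAlgebra.norm_le_norm_of_nonneg_of_le inner_self_nonneg h

lemma norm_le_of_inner_op_smul_self_le [StarOrderedRing A] (u : Aˣ) {x y : E}
    (h : ⟪x <• (u : A), x <• (u : A)⟫_A ≤ ⟪y, y⟫_A) : ‖x‖ ≤ ‖(↑u⁻¹ : A)‖ * ‖y‖ := by
  refine (pow_le_pow_iff_left₀ (norm_nonneg _) (by positivity) two_ne_zero).mp ?_
  rw [mul_pow, norm_sq_eq A y]
  exact norm_sq_le_of_inner_op_smul_self_le u h

lemma norm_le_of_inner_op_smul_self_le_inner [StarOrderedRing A] (u : Aˣ) {x y : E}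
    (h : ⟪x <• (u : A), x <• (u : A)⟫_A ≤ ⟪x, y⟫_A) : ‖x‖ ≤ ‖(↑u⁻¹ : A)‖ ^ 2 * ‖y‖ := by
  have hsq : ‖x‖ * ‖x‖ ≤ (‖(↑u⁻¹ : A)‖ ^ 2 * ‖y‖) * ‖x‖ :=
    calc ‖x‖ * ‖x‖ = ‖x‖ ^ 2 := (sq _).symm
      _ ≤ ‖(↑u⁻¹ : A)‖ ^ 2 * ‖⟪x, y⟫_A‖ := norm_sq_le_of_inner_op_smul_self_le u h
      _ ≤ ‖(↑u⁻¹ : A)‖ ^ 2 * (‖x‖ * ‖y‖) := by gcongr; exact norm_inner_le A x y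
      _ = _ := by ring
  rcases (norm_nonneg x).eq_or_lt with hx | hx
  · rw [← hx]; positivity
  · exact le_of_mul_le_mul_right hsq hx

end CStarModuleRight

namespace IsWeight

variable {ω : ℕ → 𝔄} (hω : IsWeight ω)
include hω

omit [StarOrderedRing 𝔄] in
lemma commute_sq (n : ℕ) (b : 𝔄) : Commute (ω n ^ 2) b :=
  ((Set.mem_center_iff.mp (hω n).1).comm b).pow_left 2

lemma star_sq (n : ℕ) : star (ω n ^ 2) = ω n ^ 2 :=
  ((IsSelfAdjoint.of_nonneg (hω n).2.1).pow 2).star_eq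

lemma sq_mul_nonneg (n : ℕ) {b : 𝔄} (hb : 0 ≤ b) : 0 ≤ ω n ^ 2 * b := by
  have h : ω n ^ 2 * b = star (ω n) * b * ω n := by
    rw [sq, mul_assoc, ((Set.mem_center_iff.mp (hω n).1).comm b).eq, ← mul_assoc,
      (IsSelfAdjoint.of_nonneg (hω n).2.1).star_eq]
  rw [h]
  exact star_left_conjugate_nonneg hb _

end IsWeight

section FrameOperator

variable {E : Type*} [NormedAddCommGroup E] [NormedSpace ℂ E] [Module 𝔄ᵐᵒᵖ E]
  [CStarModuleRight 𝔄 E] {P : ℕ → E →L[ℂ] E} {ω : ℕ → 𝔄}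

variable (P ω) in
def frameForm (s : Finset ℕ) (u v : E) : 𝔄 :=
  ∑ n ∈ s, ω n ^ 2 * ⟪P n u, P n v⟫_𝔄

lemma isPosSemidefForm_frameForm (hω : IsWeight ω)
    (hP : ∀ n (a : 𝔄) x, P n (x <• a) = P n x <• a) (s : Finset ℕ) :
    IsPosSemidefForm (frameForm P ω s) where
  map_sub_right u v w := by
    simp only [frameForm, map_sub, CStarModuleRight.inner_sub_right, mul_sub,
      Finset.sum_sub_distrib]
  map_op_smul_right u v a := by
    simp only [frameForm, hP, CStarModuleRight.inner_op_smul_right, Finset.sum_mul, mul_assoc]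
  star_apply u v := by
    simp only [frameForm, star_sum, star_mul, CStarModuleRight.star_inner, hω.star_sq,
      (hω.commute_sq _ _).eq]
  nonneg u := Finset.sum_nonneg fun n _ => hω.sq_mul_nonneg n CStarModuleRight.inner_self_nonneg

omit [StarOrderedRing 𝔄] in
lemma inner_op_smul_weight_sq (hω : IsWeight ω)
    (hPP : ∀ n x y, ⟪y, P n x⟫_𝔄 = ⟪P n y, P n x⟫_𝔄) (n : ℕ) (x y : E) :
    ⟪y, P n x <• ω n ^ 2⟫_𝔄 = ω n ^ 2 * ⟪P n y, P n x⟫_𝔄 := by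
  rw [CStarModuleRight.inner_op_smul_right, hPP, (hω.commute_sq n _).eq]

omit [StarOrderedRing 𝔄] in
lemma inner_sum_op_smul_weight_sq (hω : IsWeight ω)
    (hPP : ∀ n x y, ⟪y, P n x⟫_𝔄 = ⟪P n y, P n x⟫_𝔄) (s : Finset ℕ) (x y : E) :
    ⟪y, ∑ n ∈ s, P n x <• ω n ^ 2⟫_𝔄 = frameForm P ω s y x := by
  simp only [CStarModuleRight.inner_sum_right, inner_op_smul_weight_sq hω hPP, frameForm]

lemma inner_eq_tsum_of_hasSum (hω : IsWeight ω)
    (hPP : ∀ n x y, ⟪y, P n x⟫_𝔄 = ⟪P n y, P n x⟫_𝔄) {x z : E}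
    (h : HasSum (fun n => P n x <• ω n ^ 2) z) (y : E) :
    ⟪y, z⟫_𝔄 = ∑' n, ω n ^ 2 * ⟪P n y, P n x⟫_𝔄 := by
  have h' := h.mapL (CStarModuleRight.innerSL 𝔄 y)
  simp only [CStarModuleRight.innerSL_apply, inner_op_smul_weight_sq hω hPP] at h'
  exact h'.tsum_eq.symm

variable (P ω) in
def IsFusionBesselWith (B : 𝔄) : Prop :=
  ∀ x : E, Summable (fun n => ω n ^ 2 * ⟪P n x, P n x⟫_𝔄) ∧
    ∑' n, ω n ^ 2 * ⟪P n x, P n x⟫_𝔄 ≤ ⟪x <• B, x <• B⟫_𝔄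

namespace IsFusionBesselWith

variable {B : 𝔄} (hB : IsFusionBesselWith P ω B) (hω : IsWeight ω)
include hB hω

lemma norm_frameForm_self_le (s : Finset ℕ) (x : E) :
    ‖frameForm P ω s x x‖ ≤ ‖B‖ ^ 2 * ‖x‖ ^ 2 := by
  have hnonneg n : 0 ≤ ω n ^ 2 * ⟪P n x, P n x⟫_𝔄 :=
    hω.sq_mul_nonneg n CStarModuleRight.inner_self_nonneg
  have hle : frameForm P ω s x x ≤ ⟪x <• B, x <• B⟫_𝔄 :=
    ((hB x).1.sum_le_tsum s fun n _ => hnonneg n).trans (hB x).2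
  calc ‖frameForm P ω s x x‖ ≤ ‖⟪x <• B, x <• B⟫_𝔄‖ :=
        CStarAlgebra.norm_le_norm_of_nonneg_of_le (Finset.sum_nonneg fun n _ => hnonneg n) hle
    _ = ‖x <• B‖ ^ 2 := (CStarModuleRight.norm_sq_eq 𝔄 _).symm
    _ ≤ (‖x‖ * ‖B‖) ^ 2 := by gcongr; exact CStarModuleRight.norm_op_smul_le x B
    _ = ‖B‖ ^ 2 * ‖x‖ ^ 2 := by ring

variable (hP : ∀ n (a : 𝔄) x, P n (x <• a) = P n x <• a)
  (hPP : ∀ n x y, ⟪y, P n x⟫_𝔄 = ⟪P n y, P n x⟫_𝔄)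
include hP hPP

lemma norm_sum_op_smul_weight_sq_sq_le (s : Finset ℕ) (x : E) :
    ‖∑ n ∈ s, P n x <• ω n ^ 2‖ ^ 2 ≤ ‖B‖ ^ 2 * ‖frameForm P ω s x x‖ := by
  set y := ∑ n ∈ s, P n x <• ω n ^ 2
  have hy : ‖y‖ ^ 2 = ‖frameForm P ω s y x‖ := by
    rw [CStarModuleRight.norm_sq_eq 𝔄, inner_sum_op_smul_weight_sq hω hPP]
  have hsq : ‖y‖ ^ 2 * ‖y‖ ^ 2 ≤ (‖B‖ ^ 2 * ‖frameForm P ω s x x‖) * ‖y‖ ^ 2 :=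
    calc ‖y‖ ^ 2 * ‖y‖ ^ 2 = ‖frameForm P ω s y x‖ ^ 2 := by rw [hy]; ring
      _ ≤ ‖frameForm P ω s y y‖ * ‖frameForm P ω s x x‖ :=
        (isPosSemidefForm_frameForm hω hP s).norm_sq_le y x
      _ ≤ (‖B‖ ^ 2 * ‖y‖ ^ 2) * ‖frameForm P ω s x x‖ := by
        gcongr; exact hB.norm_frameForm_self_le hω s y
      _ = _ := by ring
  rcases (sq_nonneg ‖y‖).eq_or_lt with h | h
  · rw [← h]; positivity
  · exact le_of_mul_le_mul_right hsq h

variable [CompleteSpace E]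

lemma summable_op_smul_weight_sq (x : E) : Summable fun n => P n x <• ω n ^ 2 := by
  rw [summable_iff_vanishing_norm]
  intro ε hε
  obtain ⟨s, hs⟩ :=
    summable_iff_vanishing_norm.mp (hB x).1 (ε ^ 2 / (‖B‖ ^ 2 + 1)) (by positivity)
  refine ⟨s, fun t hts => lt_of_pow_lt_pow_left₀ 2 hε.le ?_⟩
  calc ‖∑ n ∈ t, P n x <• ω n ^ 2‖ ^ 2 ≤ ‖B‖ ^ 2 * ‖frameForm P ω t x x‖ :=
        hB.norm_sum_op_smul_weight_sq_sq_le hω hP hPP t x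
    _ ≤ (‖B‖ ^ 2 + 1) * ‖frameForm P ω t x x‖ := by gcongr; linarith
    _ < (‖B‖ ^ 2 + 1) * (ε ^ 2 / (‖B‖ ^ 2 + 1)) := by gcongr; exact hs t hts
    _ = ε ^ 2 := by field_simp

theorem exists_frameOperator :
    ∃ T : E →L[ℂ] E, ∀ x, HasSum (fun n => P n x <• ω n ^ 2) (T x) := by
  let S (N : ℕ) : E →L[ℂ] E :=
    ∑ n ∈ Finset.range N, (CStarModuleRight.opSmulCLM E (ω n ^ 2)).comp (P n)
  have hS : Filter.Tendsto (fun N x => S N x) Filter.atTop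
      (nhds fun x => ∑' n, P n x <• ω n ^ 2) := by
    refine tendsto_pi_nhds.mpr fun x => ?_
    simpa [S, CStarModuleRight.opSmulCLM_apply] using
      (hB.summable_op_smul_weight_sq hω hP hPP x).hasSum.tendsto_sum_nat
  exact ⟨continuousLinearMapOfTendsto S hS,
    fun x => (hB.summable_op_smul_weight_sq hω hP hPP x).hasSum⟩

end IsFusionBesselWith

end FrameOperator

/-- Theorem 3.4 (second part): if `((ℌ_n, ω_n))_n` is a *-fusion frame of `H` with lower
bound `A`, then the frame operator `S : x ↦ ∑_n ω_n² • P_{ℌ_n} x` is invertible; in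
particular its positive square root `R` (any bounded self-adjoint positive operator with
`R² = S`) satisfies `‖R x‖ ≥ ‖A⁻¹‖⁻¹ ‖x‖` for all `x`. -/
theorem fusionFrame_frameOperator_invertible
    (P : ℕ → H →L[ℂ] H) (ℌ : ℕ → Submodule 𝔄ᵐᵒᵖ H) (ω : ℕ → 𝔄)
    (hproj : ∀ n, IsOrthoProjectionOnto (P n) (ℌ n))
    (hw : IsWeight ω) (A B : 𝔄) (hAu : IsUnit A)
    (hframe : IsFusionFrameWith P ω A B)
    (S : H → H) (hS : ∀ x, S x = ∑' n, (P n x) <• (ω n ^ 2)) :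
    Function.Bijective S ∧
    ∀ R : H →L[ℂ] H,
      (∀ x y : H, ⟪R x, y⟫_𝔄 = ⟪x, R y⟫_𝔄) →
      (∀ x : H, 0 ≤ ⟪x, R x⟫_𝔄) →
      (∀ x : H, R (R x) = S x) →
      ∀ x : H, ‖((hAu.unit⁻¹ : 𝔄ˣ) : 𝔄)‖⁻¹ * ‖x‖ ≤ ‖R x‖ := by
  have hP n a x : P n (x <• a) = P n x <• a := (hproj n).1 a x
  have hPP n x y : ⟪y, P n x⟫_𝔄 = ⟪P n y, P n x⟫_𝔄 := by rw [(hproj n).2.2.1, (hproj n).2.1]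
  have hB : IsFusionBesselWith P ω B := fun x => ⟨(hframe.2.2 x).1, (hframe.2.2 x).2.2⟩
  obtain ⟨T, hT⟩ := hB.exists_frameOperator hw hP hPP
  have hST : S = T := funext fun x => (hS x).trans (hT x).tsum_eq
  have hlow (x : H) : ⟪x <• (hAu.unit : 𝔄), x <• (hAu.unit : 𝔄)⟫_𝔄 ≤ ⟪x, T x⟫_𝔄 := by
    rw [inner_eq_tsum_of_hasSum hw hPP (hT x), hAu.unit_spec]
    exact (hframe.2.2 x).2.1
  refine ⟨?_, fun R hRsa _ hRR x => ?_⟩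
  · rw [hST, ← T.isUnit_iff_bijective]
    refine T.isUnit_of_forall_add_smul_bounded_below (sq_nonneg ‖(↑hAu.unit⁻¹ : 𝔄)‖)
      fun t ht x => ?_
    refine CStarModuleRight.norm_le_of_inner_op_smul_self_le_inner hAu.unit ((hlow x).trans ?_)
    rw [CStarModuleRight.inner_add_right, CStarModuleRight.inner_smul_right_complex,
      ← RCLike.real_smul_eq_coe_smul]
    exact le_add_of_nonneg_right (smul_nonneg ht CStarModuleRight.inner_self_nonneg)
  · refine inv_mul_le_of_le_mul₀ (norm_nonneg _) (norm_nonneg _) ?_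
    refine CStarModuleRight.norm_le_of_inner_op_smul_self_le hAu.unit ?_
    rw [hRsa, hRR, hST]
    exact hlow x
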